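/- arXiv:2309.10289 — 8 statements merged into one kernel-verified Lean document; each statement's English description precedes it below -/
import Mathlib

section
/- Weak duality with approximately feasible duals for the Stochastic Configuration LP: let U and V be finite sets, with V carrying a linear order ≺, and p : U × V → [0,1]; set S(v) = {v' ∈ S : v' ≺ v}, p_{uS} = Σ_{v∈S} p_{uv}, and p̃_{uS} = 1 − ∏_{v∈S}(1 − p_{uv}). Let θ = (θ_u)_{u∈U} be independent random variables, each exponentially distributed with mean 1. Let Γ ≥ 0, and let α_u : ℝ_{≥0}^U → ℝ_{≥0} (measurable, depending only on the coordinates θ_{-u} other than u) and β_v : ℝ_{≥0}^U → ℝ_{≥0} (measurable) satisfy, for every u ∈ U, every S ⊆ V, and almost every θ_{-u}: α_u(θ_{-u}) + E_{θ_u}[ Σ_{v∈S : θ_u ≥ p_{uS(v)}} β_v(θ_u, θ_{-u}) ] ≥ Γ · p̃_{uS}. Then for every family y_{uS} : ℝ_{≥0}^U → [0,1] (measurable, with y_{uS} depending only on θ_{-u}) satisfying, for every u and almost every θ_{-u}, Σ_{S⊆V} y_{uS}(θ_{-u}) ≤ 1, and for every v ∈ V and almost every θ, Σ_{u∈U} Σ_{S⊆V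 : v∈S, θ_u ≥ p_{uS(v)}} y_{uS}(θ_{-u}) ≤ 1, one has Γ · Σ_{u∈U} Σ_{S⊆V} p̃_{uS} · E_{θ_{-u}}[y_{uS}(θ_{-u})] ≤ E_θ[ Σ_{u∈U} α_u(θ_{-u}) + Σ_{v∈V} β_v(θ) ]. -/
/-!
Multiply the dual constraint of `(u, S)` by `y u S` and integrate. Since `y u S` does not depend on
`θ u`, integrating out a resampled copy `t` of `θ u` against the product measure is the same as
integrating at `t = θ u`, so the dual side becomes
`𝔼[y_{uS} α_u] + 𝔼[y_{uS} ∑_{v ∈ S, p_{uS(v)} ≤ θ_u} β_v]`.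
Summing over `S`, the offline constraint bounds the `α`-part by `𝔼[α_u]`; summing over `u` and `S`
and exchanging the sums with the one over `v`, the online constraint bounds the `β`-part by
`∑_v 𝔼[β_v]`.
-/

open Finset MeasureTheory ProbabilityTheory

section Resampling

variable {ι : Type*} [Fintype ι] [DecidableEq ι] {X : ι → Type*} [∀ i, MeasurableSpace (X i)]
  (μ : ∀ i, Measure (X i)) [∀ i, IsProbabilityMeasure (μ i)] (i : ι)

theorem measurePreserving_update_pi :
    MeasurePreserving (fun q : (∀ j, X j) × X i => Function.update q.1 i q.2)
      ((Measure.pi μ).prod (μ i)) (Measure.pi μ) := by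
  refine ⟨by fun_prop, (Measure.pi_eq fun s hs => ?_).symm⟩
  have hpre : (fun q : (∀ j, X j) × X i => Function.update q.1 i q.2) ⁻¹' Set.univ.pi s
      = Set.univ.pi (Function.update s i Set.univ) ×ˢ s i := by
    ext ⟨θ, t⟩
    simp only [Set.mem_preimage, Set.mem_univ_pi, Set.mem_prod]
    grind
  rw [Measure.map_apply (by fun_prop) (MeasurableSet.univ_pi hs), hpre, Measure.prod_prod,
    Measure.pi_pi, ← Finset.mul_prod_erase _ _ (mem_univ i),
    ← Finset.mul_prod_erase _ (fun j => μ j (s j)) (mem_univ i)]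
  simp only [Function.update_self, measure_univ, one_mul]
  rw [mul_comm]
  congr 1
  exact Finset.prod_congr rfl fun j hj => by rw [Function.update_of_ne (ne_of_mem_erase hj)]

variable {E : Type*} [NormedAddCommGroup E] [NormedSpace ℝ E] {g : (∀ j, X j) → E}

theorem MeasureTheory.Integrable.integral_update_pi (hg : Integrable g (Measure.pi μ)) :
    Integrable (fun θ => ∫ t, g (Function.update θ i t) ∂μ i) (Measure.pi μ) :=
  (((measurePreserving_update_pi μ i).integrable_comp hg.1).2 hg).integral_prod_left

theorem integral_integral_update_pi (hg : Integrable g (Measure.pi μ)) :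
    ∫ θ, ∫ t, g (Function.update θ i t) ∂μ i ∂Measure.pi μ = ∫ θ, g θ ∂Measure.pi μ := by
  have hF := measurePreserving_update_pi μ i
  have hgF := (hF.integrable_comp hg.1).2 hg
  calc ∫ θ, ∫ t, g (Function.update θ i t) ∂μ i ∂Measure.pi μ
      = ∫ q, g (Function.update q.1 i q.2) ∂(Measure.pi μ).prod (μ i) := (integral_prod _ hgF).symm
    _ = ∫ θ, g θ ∂Measure.pi μ := by
      conv_rhs => rw [← hF.map_eq]
      exact (integral_map hF.measurable.aemeasurable (by rw [hF.map_eq]; exact hg.1)).symm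

end Resampling

section Duality

variable {Ω : Type*} [MeasurableSpace Ω] {P : Measure Ω}

theorem MeasureTheory.Integrable.mul_of_mem_Icc {f y : Ω → ℝ} (hf : Integrable f P)
    (hy : AEStronglyMeasurable y P) (hy01 : ∀ ω, y ω ∈ Set.Icc (0 : ℝ) 1) :
    Integrable (fun ω => y ω * f ω) P :=
  hf.bdd_mul hy (ae_of_all _ fun ω => abs_le.2 ⟨by linarith [(hy01 ω).1], (hy01 ω).2⟩)

theorem sum_integral_mul_le_integral {ι : Type*} (s : Finset ι) {a : Ω → ℝ} {y : ι → Ω → ℝ}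
    (ha : Integrable a P) (ha0 : ∀ ω, 0 ≤ a ω) (hym : ∀ i, Measurable (y i))
    (hy01 : ∀ i ω, y i ω ∈ Set.Icc (0 : ℝ) 1) (hsum : ∀ᵐ ω ∂P, ∑ i ∈ s, y i ω ≤ 1) :
    ∑ i ∈ s, ∫ ω, y i ω * a ω ∂P ≤ ∫ ω, a ω ∂P := by
  rw [← integral_finsetSum s fun i _ => ha.mul_of_mem_Icc (hym i).aestronglyMeasurable (hy01 i)]
  refine integral_mono_ae (integrable_finsetSum s fun i _ =>
    ha.mul_of_mem_Icc (hym i).aestronglyMeasurable (hy01 i)) ha ?_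
  filter_upwards [hsum] with ω hω
  rw [← sum_mul]
  exact mul_le_of_le_one_left (ha0 ω) hω

theorem integrable_sum_filter_le_apply {U V : Type*} {β : V → (U → ℝ) → ℝ} {P : Measure (U → ℝ)}
    (hβ : ∀ v, Integrable (β v) P) (S : Finset V) (c : V → ℝ) (u : U) :
    Integrable (fun θ => ∑ v ∈ S with c v ≤ θ u, β v θ) P := by
  have hmeas : ∀ v, MeasurableSet {θ : U → ℝ | c v ≤ θ u} := fun v =>
    measurableSet_le measurable_const (measurable_pi_apply u)
  refine (integrable_finsetSum S fun v _ => (hβ v).indicator (hmeas v)).congr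
    (ae_of_all _ fun θ => ?_)
  simp [sum_filter, Set.indicator_apply]

variable {U V : Type*} [Fintype U] [Fintype V] [DecidableEq V]

theorem sum_sum_mul_sum_filter_eq {M : Type*} [CommSemiring M] (y : U → Finset V → M) (b : V → M)
    (reach : U → Finset V → V → Prop) [∀ u S v, Decidable (reach u S v)] :
    ∑ u, ∑ S, y u S * ∑ v ∈ S with reach u S v, b v
      = ∑ v, b v * ∑ u, ∑ S with v ∈ S ∧ reach u S v, y u S := by
  have hS : ∀ u S, ∑ v ∈ S with reach u S v, b v
      = ∑ v, if v ∈ S ∧ reach u S v then b v else 0 := by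
    intro u S
    rw [← sum_filter]
    congr 1
    ext v
    simp
  simp only [hS, mul_sum, sum_filter, mul_ite, mul_zero]
  conv_lhs => arg 2; ext u; rw [sum_comm]
  rw [sum_comm]
  simp only [mul_comm]

theorem sum_sum_integral_mul_sum_filter_le {P : Measure (U → ℝ)} {β : V → (U → ℝ) → ℝ}
    {y : U → Finset V → (U → ℝ) → ℝ} (c : U → Finset V → V → ℝ)
    (hβ : ∀ v, Integrable (β v) P) (hβ0 : ∀ v θ, 0 ≤ β v θ)
    (hym : ∀ u S, Measurable (y u S)) (hy01 : ∀ u S θ, y u S θ ∈ Set.Icc (0 : ℝ) 1)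
    (honline : ∀ v, ∀ᵐ θ ∂P, ∑ u, ∑ S with v ∈ S ∧ c u S v ≤ θ u, y u S θ ≤ 1) :
    ∑ u, ∑ S, ∫ θ, y u S θ * ∑ v ∈ S with c u S v ≤ θ u, β v θ ∂P ≤ ∑ v, ∫ θ, β v θ ∂P := by
  have hint : ∀ u S, Integrable (fun θ => y u S θ * ∑ v ∈ S with c u S v ≤ θ u, β v θ) P :=
    fun u S => (integrable_sum_filter_le_apply hβ S (c u S) u).mul_of_mem_Icc
      (hym u S).aestronglyMeasurable (hy01 u S)
  simp only [← integral_finsetSum _ fun u _ => integrable_finsetSum _ fun S _ => hint u S,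
    ← integral_finsetSum _ fun S _ => hint _ S, ← integral_finsetSum _ fun v _ => hβ v]
  refine integral_mono_ae (integrable_finsetSum _ fun u _ => integrable_finsetSum _ fun S _ =>
    hint u S) (integrable_finsetSum _ fun v _ => hβ v) ?_
  filter_upwards [ae_all_iff.2 honline] with θ hθ
  rw [sum_sum_mul_sum_filter_eq]
  exact sum_le_sum fun v _ => mul_le_of_le_one_right (hβ0 v θ) (hθ v)

end Duality

section ConfigurationLP

variable {U V : Type*} [Fintype U] [DecidableEq U]
  {μ : U → Measure ℝ} [∀ u, IsProbabilityMeasure (μ u)]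

theorem mul_integral_le_of_dual_constraint {u : U} {S : Finset V} {c : V → ℝ} {r : ℝ}
    {α y : (U → ℝ) → ℝ} {β : V → (U → ℝ) → ℝ}
    (hα : Integrable α (Measure.pi μ)) (hβ : ∀ v, Integrable (β v) (Measure.pi μ))
    (hym : Measurable y) (hy01 : ∀ θ, y θ ∈ Set.Icc (0 : ℝ) 1)
    (hyu : ∀ θ θ', (∀ u' ≠ u, θ u' = θ' u') → y θ = y θ')
    (hdual : ∀ᵐ θ ∂Measure.pi μ,
      r ≤ α θ + ∫ t, ∑ v ∈ S with c v ≤ t, β v (Function.update θ u t) ∂μ u) :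
    r * ∫ θ, y θ ∂Measure.pi μ ≤ ∫ θ, y θ * α θ ∂Measure.pi μ
      + ∫ θ, y θ * ∑ v ∈ S with c v ≤ θ u, β v θ ∂Measure.pi μ := by
  set G : (U → ℝ) → ℝ := fun θ => y θ * ∑ v ∈ S with c v ≤ θ u, β v θ
  have hG : Integrable G (Measure.pi μ) :=
    (integrable_sum_filter_le_apply hβ S c u).mul_of_mem_Icc hym.aestronglyMeasurable hy01
  -- `y` does not see the resampled coordinate, so it comes out of the inner integral.
  have hresample : ∀ θ, y θ * ∫ t, ∑ v ∈ S with c v ≤ t, β v (Function.update θ u t) ∂μ u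
      = ∫ t, G (Function.update θ u t) ∂μ u := by
    intro θ
    rw [← integral_const_mul]
    refine integral_congr_ae (ae_of_all _ fun t => ?_)
    simp only [G, Function.update_self,
      hyu (Function.update θ u t) θ fun u' hu' => Function.update_of_ne hu' t θ]
  have hyα := hα.mul_of_mem_Icc hym.aestronglyMeasurable hy01
  have hy : Integrable y (Measure.pi μ) := by
    simpa using (integrable_const (1 : ℝ)).mul_of_mem_Icc hym.aestronglyMeasurable hy01
  calc r * ∫ θ, y θ ∂Measure.pi μ = ∫ θ, y θ * r ∂Measure.pi μ := by
        rw [← integral_const_mul]; simp only [mul_comm]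
    _ ≤ ∫ θ, y θ * α θ + ∫ t, G (Function.update θ u t) ∂μ u ∂Measure.pi μ := by
        refine integral_mono_ae (hy.mul_const r) (hyα.add (hG.integral_update_pi μ u)) ?_
        filter_upwards [hdual] with θ hθ
        rw [← hresample, ← mul_add]
        exact mul_le_mul_of_nonneg_left hθ (hy01 θ).1
    _ = ∫ θ, y θ * α θ ∂Measure.pi μ + ∫ θ, G θ ∂Measure.pi μ := by
        rw [integral_add hyα (hG.integral_update_pi μ u), integral_integral_update_pi μ u hG]

theorem sum_sum_mul_integral_le_integral_of_dual_feasible [Fintype V] [DecidableEq V]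
    {α : U → (U → ℝ) → ℝ} {β : V → (U → ℝ) → ℝ} {y : U → Finset V → (U → ℝ) → ℝ}
    (r : U → Finset V → ℝ) (c : U → Finset V → V → ℝ)
    (hα : ∀ u, Integrable (α u) (Measure.pi μ)) (hβ : ∀ v, Integrable (β v) (Measure.pi μ))
    (hα0 : ∀ u θ, 0 ≤ α u θ) (hβ0 : ∀ v θ, 0 ≤ β v θ)
    (hdual : ∀ u S, ∀ᵐ θ ∂Measure.pi μ,
      r u S ≤ α u θ + ∫ t, ∑ v ∈ S with c u S v ≤ t, β v (Function.update θ u t) ∂μ u)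
    (hym : ∀ u S, Measurable (y u S)) (hy01 : ∀ u S θ, y u S θ ∈ Set.Icc (0 : ℝ) 1)
    (hyu : ∀ u S θ θ', (∀ u' ≠ u, θ u' = θ' u') → y u S θ = y u S θ')
    (hoffline : ∀ u, ∀ᵐ θ ∂Measure.pi μ, ∑ S, y u S θ ≤ 1)
    (honline : ∀ v, ∀ᵐ θ ∂Measure.pi μ, ∑ u, ∑ S with v ∈ S ∧ c u S v ≤ θ u, y u S θ ≤ 1) :
    ∑ u, ∑ S, r u S * ∫ θ, y u S θ ∂Measure.pi μ
      ≤ ∫ θ, (∑ u, α u θ + ∑ v, β v θ) ∂Measure.pi μ := calc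
  ∑ u, ∑ S, r u S * ∫ θ, y u S θ ∂Measure.pi μ
      ≤ ∑ u, ∑ S, (∫ θ, y u S θ * α u θ ∂Measure.pi μ
        + ∫ θ, y u S θ * ∑ v ∈ S with c u S v ≤ θ u, β v θ ∂Measure.pi μ) :=
    sum_le_sum fun u _ => sum_le_sum fun S _ => mul_integral_le_of_dual_constraint (hα u) hβ
      (hym u S) (hy01 u S) (hyu u S) (hdual u S)
  _ = ∑ u, ∑ S, ∫ θ, y u S θ * α u θ ∂Measure.pi μ
        + ∑ u, ∑ S, ∫ θ, y u S θ * ∑ v ∈ S with c u S v ≤ θ u, β v θ ∂Measure.pi μ := by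
    simp only [sum_add_distrib]
  _ ≤ ∑ u, ∫ θ, α u θ ∂Measure.pi μ + ∑ v, ∫ θ, β v θ ∂Measure.pi μ :=
    add_le_add (sum_le_sum fun u _ => sum_integral_mul_le_integral _ (hα u) (hα0 u) (hym u)
      (hy01 u) (hoffline u)) (sum_sum_integral_mul_sum_filter_le c hβ hβ0 hym hy01 honline)
  _ = ∫ θ, (∑ u, α u θ + ∑ v, β v θ) ∂Measure.pi μ := by
    rw [integral_add (integrable_finsetSum _ fun u _ => hα u)
      (integrable_finsetSum _ fun v _ => hβ v), integral_finsetSum _ fun u _ => hα u,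
      integral_finsetSum _ fun v _ => hβ v]

end ConfigurationLP

theorem stochastic_configuration_lp_weak_duality_general
    {U V : Type*} [Fintype U] [DecidableEq U] [Fintype V] [DecidableEq V]
    [LinearOrder V]
    (p : U → V → ℝ)
    (Γ : ℝ)
    -- the product measure of i.i.d. exponential budgets with mean 1
    (Θ : Measure (U → ℝ)) (hΘ : Θ = Measure.pi fun _ : U => expMeasure 1)
    (α : U → (U → ℝ) → ℝ) (β : V → (U → ℝ) → ℝ)
    (hαnonneg : ∀ u θ, 0 ≤ α u θ) (hβnonneg : ∀ v θ, 0 ≤ β v θ)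
    (hαint : ∀ u, Integrable (α u) Θ) (hβint : ∀ v, Integrable (β v) Θ)
    -- approximate dual feasibility, for almost every realization of budgets
    (hdual : ∀ u : U, ∀ S : Finset V, ∀ᵐ θ ∂Θ,
      α u θ +
        ∫ t, (∑ v ∈ S.filter fun v => ∑ v' ∈ S.filter (· < v), p u v' ≤ t,
            β v (Function.update θ u t)) ∂(expMeasure 1)
        ≥ Γ * (1 - ∏ v ∈ S, (1 - p u v)))
    (y : U → Finset V → (U → ℝ) → ℝ)
    (hymeas : ∀ u S, Measurable (y u S))
    (hyrange : ∀ u S θ, y u S θ ∈ Set.Icc (0 : ℝ) 1)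
    -- `y u S` depends only on the coordinates other than `u`
    (hyindep : ∀ u S (θ θ' : U → ℝ), (∀ u' ≠ u, θ u' = θ' u') →
      y u S θ = y u S θ')
    (hoffline : ∀ u : U, ∀ᵐ θ ∂Θ, ∑ S : Finset V, y u S θ ≤ 1)
    (honline : ∀ v : V, ∀ᵐ θ ∂Θ,
      ∑ u : U, ∑ S ∈ Finset.univ.filter
          (fun S : Finset V =>
            v ∈ S ∧ ∑ v' ∈ S.filter (· < v), p u v' ≤ θ u),
        y u S θ ≤ 1) :
    Γ * ∑ u : U, ∑ S : Finset V,
        (1 - ∏ v ∈ S, (1 - p u v)) * ∫ θ, y u S θ ∂Θ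
      ≤ ∫ θ, (∑ u : U, α u θ + ∑ v : V, β v θ) ∂Θ := by
  subst hΘ
  have := isProbabilityMeasure_expMeasure (r := 1) one_pos
  simp only [mul_sum, ← mul_assoc]
  exact sum_sum_mul_integral_le_integral_of_dual_feasible
    (fun u S => Γ * (1 - ∏ v ∈ S, (1 - p u v)))
    (fun u S v => ∑ v' ∈ S with v' < v, p u v') hαint hβint hαnonneg hβnonneg hdual hymeas
    hyrange hyindep hoffline honline

/-- Weak duality with approximately feasible duals for the Stochastic
Configuration LP, with i.i.d. exponential budgets of mean `1`. -/
theorem stochastic_configuration_lp_weak_duality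
    {U V : Type*} [Fintype U] [DecidableEq U] [Fintype V] [DecidableEq V]
    [LinearOrder V]
    (p : U → V → ℝ) (hp : ∀ u v, p u v ∈ Set.Icc (0 : ℝ) 1)
    (Γ : ℝ) (hΓ : 0 ≤ Γ)
    -- the product measure of i.i.d. exponential budgets with mean 1
    (Θ : Measure (U → ℝ)) (hΘ : Θ = Measure.pi fun _ : U => expMeasure 1)
    (α : U → (U → ℝ) → ℝ) (β : V → (U → ℝ) → ℝ)
    (hαmeas : ∀ u, Measurable (α u)) (hβmeas : ∀ v, Measurable (β v))
    (hαnonneg : ∀ u θ, 0 ≤ α u θ) (hβnonneg : ∀ v θ, 0 ≤ β v θ)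
    -- `α u` depends only on the coordinates other than `u`
    (hαindep : ∀ u (θ θ' : U → ℝ), (∀ u' ≠ u, θ u' = θ' u') → α u θ = α u θ')
    (hαint : ∀ u, Integrable (α u) Θ) (hβint : ∀ v, Integrable (β v) Θ)
    -- approximate dual feasibility, for almost every realization of budgets
    (hdual : ∀ u : U, ∀ S : Finset V, ∀ᵐ θ ∂Θ,
      α u θ +
        ∫ t, (∑ v ∈ S.filter fun v => ∑ v' ∈ S.filter (· < v), p u v' ≤ t,
            β v (Function.update θ u t)) ∂(expMeasure 1)
        ≥ Γ * (1 - ∏ v ∈ S, (1 - p u v)))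
    (y : U → Finset V → (U → ℝ) → ℝ)
    (hymeas : ∀ u S, Measurable (y u S))
    (hyrange : ∀ u S θ, y u S θ ∈ Set.Icc (0 : ℝ) 1)
    -- `y u S` depends only on the coordinates other than `u`
    (hyindep : ∀ u S (θ θ' : U → ℝ), (∀ u' ≠ u, θ u' = θ' u') →
      y u S θ = y u S θ')
    (hoffline : ∀ u : U, ∀ᵐ θ ∂Θ, ∑ S : Finset V, y u S θ ≤ 1)
    (honline : ∀ v : V, ∀ᵐ θ ∂Θ,
      ∑ u : U, ∑ S ∈ Finset.univ.filter
          (fun S : Finset V =>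
            v ∈ S ∧ ∑ v' ∈ S.filter (· < v), p u v' ≤ θ u),
        y u S θ ≤ 1) :
    Γ * ∑ u : U, ∑ S : Finset V,
        (1 - ∏ v ∈ S, (1 - p u v)) * ∫ θ, y u S θ ∂Θ
      ≤ ∫ θ, (∑ u : U, α u θ + ∑ v : V, β v θ) ∂Θ :=
  stochastic_configuration_lp_weak_duality_general p Γ Θ hΘ α β hαnonneg hβnonneg hαint hβint hdual
    y hymeas hyrange hyindep hoffline honline
end

section
/- There exists a nondecreasing function g : [0,∞) → [0,1] such that for every ℓ ≥ 0 and every q ≥ 0: ∫_0^ℓ e^{−θ} g(θ) dθ + (1 − g(ℓ)) · ∫_0^∞ e^{−θ} ( min{q, θ} − (ℓ − θ)^+ )^+ dθ ≥ 2(1 − ln 2) · (1 − e^{−q}). -/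
/-!
The witness is `g ℓ = h (2 e^{ℓ/2} - 1)` with `h v = 2 v log (1 + 1/v) - 1`; it increases from
`g 0 = 2 ln 2 - 1` and stays below `1`. With `P ℓ = 2 e^{-ℓ/2} - e^{-ℓ}`, the value of the second
integral for `q = ∞`, `g` solves the linear ODE that keeps `∫₀^ℓ e^{-θ} g + (1 - g ℓ) P ℓ` equal to
its value `2 (1 - ln 2)` at `ℓ = 0`. Capping at `q` lowers the second integral by at most
`∫₀^∞ e^{-θ} (θ - q)⁺ = e^{-q}`, so the left-hand side is at least
`2 (1 - ln 2) - (1 - g ℓ) e^{-q}`, and `1 - g ℓ ≤ 1 - g 0 = 2 (1 - ln 2)`.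
-/

open MeasureTheory Real Set Filter Topology

lemma inv_add_one_le_log_add_one_sub_log {v : ℝ} (hv : 0 < v) :
    (v + 1)⁻¹ ≤ log (v + 1) - log v := by
  have h := one_sub_inv_le_log_of_pos (show 0 < (v + 1) / v by positivity)
  rw [log_div (by positivity) hv.ne', inv_div] at h
  calc (v + 1)⁻¹ = 1 - v / (v + 1) := by field_simp; ring
    _ ≤ _ := h

lemma log_add_one_sub_log_le_inv {v : ℝ} (hv : 0 < v) :
    log (v + 1) - log v ≤ v⁻¹ := by
  have h := log_le_sub_one_of_pos (show 0 < (v + 1) / v by positivity)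
  rw [log_div (by positivity) hv.ne'] at h
  calc _ ≤ (v + 1) / v - 1 := h
    _ = v⁻¹ := by field_simp; ring

noncomputable def splitProfile (v : ℝ) : ℝ := 2 * v * (log (v + 1) - log v) - 1

noncomputable def gainSplitting (x : ℝ) : ℝ := splitProfile (2 * exp (x / 2) - 1)

lemma hasDerivAt_splitProfile {v : ℝ} (hv : 0 < v) :
    HasDerivAt splitProfile (2 * (log (v + 1) - log v - (v + 1)⁻¹)) v := by
  have hL :=
    (((hasDerivAt_id v).add_const 1).log (by positivity)).sub ((hasDerivAt_id v).log hv.ne')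
  refine ((((hasDerivAt_id v).const_mul 2).mul hL).sub_const 1).congr_deriv ?_
  simp only [id, Pi.sub_apply]
  field_simp
  ring

lemma monotoneOn_splitProfile : MonotoneOn splitProfile (Ioi 0) := by
  refine monotoneOn_of_hasDerivWithinAt_nonneg (convex_Ioi 0)
    (fun v hv ↦ (hasDerivAt_splitProfile hv).continuousAt.continuousWithinAt)
    (fun v hv ↦ (hasDerivAt_splitProfile (interior_subset hv)).hasDerivWithinAt)
    fun v hv ↦ ?_
  have := inv_add_one_le_log_add_one_sub_log (interior_subset hv : 0 < v)
  linarith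

lemma splitProfile_le_one {v : ℝ} (hv : 0 < v) : splitProfile v ≤ 1 := by
  have h := mul_le_mul_of_nonneg_left (log_add_one_sub_log_le_inv hv) (by positivity : 0 ≤ 2 * v)
  rw [mul_assoc 2 v v⁻¹, mul_inv_cancel₀ hv.ne'] at h
  unfold splitProfile
  linarith

lemma splitProfile_one : splitProfile 1 = 2 * log 2 - 1 := by
  norm_num [splitProfile]

lemma two_mul_exp_half_sub_one_pos {x : ℝ} (hx : 0 ≤ x) : 0 < 2 * exp (x / 2) - 1 := by
  have := one_le_exp (by positivity : 0 ≤ x / 2)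
  linarith

lemma monotoneOn_gainSplitting : MonotoneOn gainSplitting (Ici 0) :=
  monotoneOn_splitProfile.comp (fun x _ y _ hxy ↦ by gcongr)
    fun _ hx ↦ two_mul_exp_half_sub_one_pos hx

lemma gainSplitting_zero : gainSplitting 0 = 2 * log 2 - 1 := by
  norm_num [gainSplitting, splitProfile_one]

lemma gainSplitting_mem_Icc {x : ℝ} (hx : 0 ≤ x) : gainSplitting x ∈ Icc 0 1 := by
  have hmono := monotoneOn_gainSplitting self_mem_Ici hx hx
  rw [gainSplitting_zero] at hmono
  have hlog2 := log_two_gt_d9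
  exact ⟨by linarith, splitProfile_le_one (two_mul_exp_half_sub_one_pos hx)⟩

lemma hasDerivAt_one_sub_gainSplitting_mul {x : ℝ} (hx : 0 ≤ x) :
    HasDerivAt (fun x ↦ (1 - gainSplitting x) * (2 * exp (-(x / 2)) - exp (-x)))
      (-(exp (-x) * gainSplitting x)) x := by
  have hv : HasDerivAt (fun x ↦ 2 * exp (x / 2) - 1) (2 * (exp (x / 2) * (1 / 2))) x :=
    (((hasDerivAt_id x).div_const 2).exp.const_mul 2).sub_const 1
  have hg : HasDerivAt gainSplitting _ x :=
    (hasDerivAt_splitProfile (two_mul_exp_half_sub_one_pos hx)).comp x hv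
  have hP : HasDerivAt (fun x ↦ 2 * exp (-(x / 2)) - exp (-x))
      (2 * (exp (-(x / 2)) * -(1 / 2)) - exp (-x) * -1) x :=
    ((((hasDerivAt_id x).div_const 2).neg.exp).const_mul 2).sub (hasDerivAt_neg x).exp
  refine (((hasDerivAt_const x 1).sub hg).mul hP).congr_deriv ?_
  have hexp : exp (-x) = (exp (x / 2))⁻¹ ^ 2 := by
    rw [← exp_neg, ← exp_nat_mul]
    ring_nf
  rw [hexp]
  simp only [Pi.sub_apply, gainSplitting, splitProfile, sub_add_cancel, exp_neg]
  field_simp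
  ring

lemma integral_exp_neg_mul_gainSplitting {ℓ : ℝ} (hℓ : 0 ≤ ℓ) :
    ∫ θ in 0..ℓ, exp (-θ) * gainSplitting θ =
      2 * (1 - log 2) - (1 - gainSplitting ℓ) * (2 * exp (-(ℓ / 2)) - exp (-ℓ)) := by
  have hIcc : uIcc 0 ℓ ⊆ Ici 0 := fun x hx ↦ (uIcc_of_le hℓ ▸ hx).1
  have hderiv : ∀ x ∈ uIcc 0 ℓ, HasDerivAt (fun x ↦ -((1 - gainSplitting x) *
      (2 * exp (-(x / 2)) - exp (-x)))) (exp (-x) * gainSplitting x) x := fun x hx ↦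
    (hasDerivAt_one_sub_gainSplitting_mul (hIcc hx)).neg.congr_deriv (neg_neg _)
  have hint : IntervalIntegrable (fun θ ↦ exp (-θ) * gainSplitting θ) volume 0 ℓ :=
    (monotoneOn_gainSplitting.mono hIcc).intervalIntegrable.continuousOn_mul (by fun_prop)
  rw [intervalIntegral.integral_eq_sub_of_hasDerivAt hderiv hint, gainSplitting_zero]
  norm_num
  ring

lemma hasDerivAt_neg_mul_exp_neg (q θ : ℝ) :
    HasDerivAt (fun t ↦ -((t - q + 1) * exp (-t))) (exp (-θ) * (θ - q)) θ := by
  refine ((((hasDerivAt_id θ).sub_const q).add_const 1).mul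
    (hasDerivAt_neg θ).exp).neg.congr_deriv ?_
  simp only [id]
  ring

lemma tendsto_neg_mul_exp_neg (q : ℝ) :
    Tendsto (fun t ↦ -((t - q + 1) * exp (-t))) atTop (𝓝 0) := by
  have h := ((tendsto_pow_mul_exp_neg_atTop_nhds_zero 1).add
    (tendsto_exp_neg_atTop_nhds_zero.const_mul (1 - q))).neg
  simp only [pow_one, mul_zero, add_zero, neg_zero] at h
  exact h.congr fun t ↦ by ring

lemma integrableOn_Ioi_exp_neg_mul_sub (q : ℝ) :
    IntegrableOn (fun θ ↦ exp (-θ) * (θ - q)) (Ioi q) :=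
  integrableOn_Ioi_deriv_of_nonneg' (fun θ _ ↦ hasDerivAt_neg_mul_exp_neg q θ)
    (fun _ hθ ↦ mul_nonneg (exp_pos _).le (sub_nonneg.2 (mem_Ioi.1 hθ).le))
    (tendsto_neg_mul_exp_neg q)

lemma integral_Ioi_exp_neg_mul_sub (q : ℝ) :
    ∫ θ in Ioi q, exp (-θ) * (θ - q) = exp (-q) := by
  rw [integral_Ioi_of_hasDerivAt_of_nonneg' (fun θ _ ↦ hasDerivAt_neg_mul_exp_neg q θ)
    (fun _ hθ ↦ mul_nonneg (exp_pos _).le (sub_nonneg.2 (mem_Ioi.1 hθ).le))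
    (tendsto_neg_mul_exp_neg q)]
  simp

lemma eqOn_exp_neg_mul_max_sub_Ioi (q : ℝ) :
    EqOn (fun θ ↦ exp (-θ) * max (θ - q) 0) (fun θ ↦ exp (-θ) * (θ - q)) (Ioi q) :=
  fun θ hθ ↦ by simp only [max_eq_left (sub_nonneg.2 (mem_Ioi.1 hθ).le)]

lemma exp_neg_mul_max_sub_eq_zero {q θ : ℝ} (hθ : θ ≤ q) : exp (-θ) * max (θ - q) 0 = 0 := by
  rw [max_eq_right (sub_nonpos.2 hθ), mul_zero]

lemma integrableOn_exp_neg_mul_max_sub (q : ℝ) :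
    IntegrableOn (fun θ ↦ exp (-θ) * max (θ - q) 0) (Ioi 0) :=
  ((integrableOn_Ioi_exp_neg_mul_sub q).congr_fun (eqOn_exp_neg_mul_max_sub_Ioi q).symm
    measurableSet_Ioi).of_forall_sdiff_eq_zero measurableSet_Ioi
      fun _ hθ ↦ exp_neg_mul_max_sub_eq_zero (not_lt.1 hθ.2)

lemma integral_exp_neg_mul_max_sub {q : ℝ} (hq : 0 ≤ q) :
    ∫ θ in Ioi 0, exp (-θ) * max (θ - q) 0 = exp (-q) := by
  rw [setIntegral_eq_of_subset_of_forall_sdiff_eq_zero measurableSet_Ioi (Ioi_subset_Ioi hq)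
    fun _ hθ ↦ exp_neg_mul_max_sub_eq_zero (not_lt.1 hθ.2),
    setIntegral_congr_fun measurableSet_Ioi (eqOn_exp_neg_mul_max_sub_Ioi q),
    integral_Ioi_exp_neg_mul_sub]

-- `(θ - (ℓ - θ)⁺)⁺ = 2 (θ - ℓ/2)⁺ - (θ - ℓ)⁺`, and capping `θ` at `q` costs at most `(θ - q)⁺`.
lemma le_max_min_sub_max (θ ℓ q : ℝ) :
    2 * max (θ - ℓ / 2) 0 - max (θ - ℓ) 0 - max (θ - q) 0 ≤
      max (min q θ - max (ℓ - θ) 0) 0 := by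
  simp only [max_def, min_def]
  split_ifs <;> linarith

lemma integrableOn_exp_neg_mul_max_min_sub_max (ℓ q : ℝ) :
    IntegrableOn (fun θ ↦ exp (-θ) * max (min q θ - max (ℓ - θ) 0) 0) (Ioi 0) := by
  refine (integrableOn_exp_neg_mul_max_sub 0).mono' (by fun_prop)
    (Eventually.of_forall fun θ ↦ ?_)
  rw [Real.norm_of_nonneg (mul_nonneg (exp_pos _).le (le_max_right _ _))]
  gcongr
  exacts [min_le_right q θ, le_max_right _ _]

lemma sub_le_integral_exp_neg_mul_max_min_sub_max {ℓ q : ℝ} (hℓ : 0 ≤ ℓ) (hq : 0 ≤ q) :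
    2 * exp (-(ℓ / 2)) - exp (-ℓ) - exp (-q) ≤
      ∫ θ in Ioi 0, exp (-θ) * max (min q θ - max (ℓ - θ) 0) 0 := by
  have hI := integrableOn_exp_neg_mul_max_sub
  have hlower := ((hI (ℓ / 2)).const_mul 2).sub (hI ℓ) |>.sub (hI q)
  calc 2 * exp (-(ℓ / 2)) - exp (-ℓ) - exp (-q)
      = ∫ θ in Ioi 0, (2 * (exp (-θ) * max (θ - ℓ / 2) 0) - exp (-θ) * max (θ - ℓ) 0
          - exp (-θ) * max (θ - q) 0) := by
        rw [integral_sub, integral_sub, integral_const_mul,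
          integral_exp_neg_mul_max_sub (by positivity), integral_exp_neg_mul_max_sub hℓ,
          integral_exp_neg_mul_max_sub hq]
        exacts [(hI _).const_mul 2, hI _, ((hI _).const_mul 2).sub (hI _), hI _]
    _ ≤ _ := by
      refine setIntegral_mono_on hlower (integrableOn_exp_neg_mul_max_min_sub_max ℓ q)
        measurableSet_Ioi fun θ _ ↦ ?_
      have := mul_le_mul_of_nonneg_left (le_max_min_sub_max θ ℓ q) (exp_pos (-θ)).le
      linarith

/-- There is a nondecreasing gain-splitting function `g : [0,∞) → [0,1]`
certifying the competitive ratio `2(1 - ln 2)` of Stochastic Balance with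
equal infinitesimal success probabilities. -/
theorem exists_gain_splitting_equal_prob :
    ∃ g : ℝ → ℝ, MonotoneOn g (Set.Ici 0) ∧
      (∀ x ∈ Set.Ici (0 : ℝ), g x ∈ Set.Icc (0 : ℝ) 1) ∧
      ∀ ℓ ≥ (0 : ℝ), ∀ q ≥ (0 : ℝ),
        (∫ θ in (0 : ℝ)..ℓ, Real.exp (-θ) * g θ)
          + (1 - g ℓ) *
            ∫ θ in Set.Ioi (0 : ℝ),
              Real.exp (-θ) * max (min q θ - max (ℓ - θ) 0) 0
        ≥ 2 * (1 - Real.log 2) * (1 - Real.exp (-q)) := by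
  refine ⟨gainSplitting, monotoneOn_gainSplitting, fun x hx ↦ gainSplitting_mem_Icc hx,
    fun ℓ hℓ q hq ↦ ?_⟩
  have hgain := sub_le_integral_exp_neg_mul_max_min_sub_max hℓ hq
  have hg0 : 2 * log 2 - 1 ≤ gainSplitting ℓ :=
    gainSplitting_zero ▸ monotoneOn_gainSplitting self_mem_Ici hℓ hℓ
  have hg1 : 0 ≤ 1 - gainSplitting ℓ := sub_nonneg.2 (gainSplitting_mem_Icc hℓ).2
  rw [integral_exp_neg_mul_gainSplitting hℓ]
  linarith [mul_le_mul_of_nonneg_left hgain hg1,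
    mul_le_mul_of_nonneg_right hg0 (exp_pos (-q)).le]
end

section
/- Define f : (0,1] → ℝ by f(μ) = 2(2 − √μ)(ln 2 − ln(2 − √μ))/√μ − 1. Then f is nonincreasing on (0,1], f(μ) ∈ [2 ln 2 − 1, 1] for all μ ∈ (0,1], and f(μ) → 1 as μ → 0^+. -/
/-!
Substituting `x = √μ / 2` turns `f` into `2 g(x) - 1` with `g(x) = -(1 - x) log(1 - x) / x`
(`gainRatio`), and `√μ / 2` increases from `0` to `1/2` on `(0,1]`. The derivative of `g` is
`(log(1 - x) + x) / x²`, which is `≤ 0` on `(0,1)` by `log y ≤ y - 1`; the same inequality, applied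
to `1 - x` and to `(1 - x)⁻¹`, gives `1 - x ≤ g(x) ≤ 1`, so `g(x) → 1` as `x → 0⁺`.
The lower bound is the value `g(1/2) = log 2` at the right end point.
-/

open Real Filter Set Topology

noncomputable def gainRatio (x : ℝ) : ℝ := -(1 - x) * log (1 - x) / x

lemma hasDerivAt_gainRatio {x : ℝ} (hx₀ : x ≠ 0) (hx₁ : x ≠ 1) :
    HasDerivAt gainRatio ((log (1 - x) + x) / x ^ 2) x := by
  have h1x : 1 - x ≠ 0 := sub_ne_zero.mpr (Ne.symm hx₁)
  have hsub : HasDerivAt (fun y : ℝ => 1 - y) (-1) x := (hasDerivAt_id x).const_sub 1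
  have hquot : HasDerivAt gainRatio _ x := (hsub.neg.mul (hsub.log h1x)).div (hasDerivAt_id x) hx₀
  convert hquot using 1
  simp only [Pi.neg_apply, Pi.mul_apply]
  field_simp
  ring

lemma antitoneOn_gainRatio : AntitoneOn gainRatio (Ioo 0 1) := by
  have hderiv : ∀ x ∈ Ioo (0 : ℝ) 1, HasDerivAt gainRatio ((log (1 - x) + x) / x ^ 2) x :=
    fun x hx => hasDerivAt_gainRatio hx.1.ne' hx.2.ne
  refine antitoneOn_of_hasDerivWithinAt_nonpos (convex_Ioo 0 1)
    (fun x hx => (hderiv x hx).continuousAt.continuousWithinAt)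
    (fun x hx => (hderiv x (interior_subset hx)).hasDerivWithinAt) fun x hx => ?_
  rw [interior_Ioo] at hx
  have hlog := log_le_sub_one_of_pos (sub_pos.mpr hx.2)
  exact div_nonpos_of_nonpos_of_nonneg (by linarith) (sq_nonneg x)

lemma one_sub_le_gainRatio {x : ℝ} (hx₀ : 0 < x) (hx₁ : x < 1) : 1 - x ≤ gainRatio x := by
  have h1x : 0 < 1 - x := sub_pos.mpr hx₁
  have hlog := log_le_sub_one_of_pos h1x
  rw [gainRatio, le_div_iff₀ hx₀]
  nlinarith

lemma gainRatio_le_one {x : ℝ} (hx₀ : 0 < x) (hx₁ : x < 1) : gainRatio x ≤ 1 := by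
  have h1x : 0 < 1 - x := sub_pos.mpr hx₁
  have hlog := log_le_sub_one_of_pos (inv_pos.mpr h1x)
  rw [log_inv] at hlog
  rw [gainRatio, div_le_one hx₀]
  nlinarith [mul_le_mul_of_nonneg_left hlog h1x.le, mul_inv_cancel₀ h1x.ne']

lemma gainRatio_half : gainRatio (1 / 2) = log 2 := by
  rw [gainRatio, show (1 : ℝ) - 1 / 2 = 2⁻¹ by norm_num, log_inv]
  ring

lemma tendsto_gainRatio_nhdsGT_zero : Tendsto gainRatio (𝓝[>] 0) (𝓝 1) := by
  have hlower : Tendsto (fun x : ℝ => 1 - x) (𝓝[>] 0) (𝓝 1) := by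
    simpa using ((continuous_sub_left (1 : ℝ)).tendsto 0).mono_left nhdsWithin_le_nhds
  have hIoo : Ioo (0 : ℝ) 1 ∈ 𝓝[>] 0 := Ioo_mem_nhdsGT one_pos
  refine tendsto_of_tendsto_of_tendsto_of_le_of_le' hlower tendsto_const_nhds ?_ ?_
  · filter_upwards [hIoo] with x hx using one_sub_le_gainRatio hx.1 hx.2
  · filter_upwards [hIoo] with x hx using gainRatio_le_one hx.1 hx.2

lemma two_mul_gainRatio_div_two (s : ℝ) :
    2 * gainRatio (s / 2) = 2 * (2 - s) * (log 2 - log (2 - s)) / s := by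
  rcases eq_or_ne s 2 with rfl | hs
  · simp [gainRatio]
  have hlog : log (1 - s / 2) = log (2 - s) - log 2 := by
    rw [show 1 - s / 2 = (2 - s) / 2 by ring, log_div (sub_ne_zero.mpr hs.symm) two_ne_zero]
  rw [gainRatio, hlog]
  ring

lemma mapsTo_sqrt_div_two : MapsTo (fun μ : ℝ => √μ / 2) (Ioc 0 1) (Ioc 0 (1 / 2)) := by
  intro μ hμ
  have hsqrt : √μ ≤ 1 := sqrt_le_one.mpr hμ.2
  exact ⟨by simp [sqrt_pos.mpr hμ.1], by linarith⟩

lemma tendsto_sqrt_div_two_nhdsGT_zero : Tendsto (fun μ : ℝ => √μ / 2) (𝓝[>] 0) (𝓝[>] 0) := by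
  refine tendsto_nhdsWithin_of_tendsto_nhds_of_eventually_within _ ?_ ?_
  · simpa using ((continuous_sqrt.div_const 2).tendsto 0).mono_left nhdsWithin_le_nhds
  · filter_upwards [self_mem_nhdsWithin] with μ hμ using by simpa using hμ

/-- The closed-form gain-splitting function
`f(μ) = 2(2 - √μ)(ln 2 - ln(2 - √μ))/√μ - 1` is nonincreasing on `(0,1]`,
takes values in `[2 ln 2 - 1, 1]` there, and tends to `1` as `μ → 0⁺`. -/
theorem gain_splitting_closed_form_properties
    (f : ℝ → ℝ)
    (hf : ∀ μ ∈ Set.Ioc (0 : ℝ) 1,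
      f μ = 2 * (2 - Real.sqrt μ) * (Real.log 2 - Real.log (2 - Real.sqrt μ))
              / Real.sqrt μ - 1) :
    AntitoneOn f (Set.Ioc (0 : ℝ) 1) ∧
      (∀ μ ∈ Set.Ioc (0 : ℝ) 1, f μ ∈ Set.Icc (2 * Real.log 2 - 1) 1) ∧
      Tendsto f (nhdsWithin 0 (Set.Ioi 0)) (nhds 1) := by
  have hf' : EqOn (fun μ => 2 * gainRatio (√μ / 2) - 1) f (Ioc 0 1) := fun μ hμ => by
    rw [hf μ hμ, ← two_mul_gainRatio_div_two]
  have hmaps : MapsTo (fun μ : ℝ => √μ / 2) (Ioc 0 1) (Ioo 0 1) := fun μ hμ =>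
    Ioc_subset_Ioo_right (by norm_num) (mapsTo_sqrt_div_two hμ)
  refine ⟨AntitoneOn.congr (fun a ha b hb hab => ?_) hf', fun μ hμ => ?_, ?_⟩
  · have hsqrt : √a / 2 ≤ √b / 2 := by gcongr
    have := antitoneOn_gainRatio (hmaps ha) (hmaps hb) hsqrt
    linarith
  · rw [← hf' hμ]
    have hlower := antitoneOn_gainRatio (hmaps hμ) (by norm_num : (1 / 2 : ℝ) ∈ Ioo 0 1)
      (mapsTo_sqrt_div_two hμ).2
    have hupper := gainRatio_le_one (hmaps hμ).1 (hmaps hμ).2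
    rw [gainRatio_half] at hlower
    constructor <;> dsimp only <;> linarith
  · have hlim : Tendsto (fun μ => 2 * gainRatio (√μ / 2) - 1) (𝓝[>] 0) (𝓝 (2 * 1 - 1)) :=
      ((tendsto_gainRatio_nhdsGT_zero.comp tendsto_sqrt_div_two_nhdsGT_zero).const_mul 2).sub_const 1
    rw [show (2 : ℝ) * 1 - 1 = 1 by norm_num] at hlim
    exact hlim.congr' (eventuallyEq_of_mem (Ioc_mem_nhdsGT one_pos) hf')
end

section
/- For every z ∈ [0,1]: z − (1 − e^{−z})/(e − 1) − (e^{z−1} − e^{−1}) ≥ 0, with equality at z = 0 and z = 1. -/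
/-!
Put `f(z) = z - (1 - e^{-z})/(e - 1) - (e^{z-1} - e^{-1})`. Then `f(0) = f(1) = 0`,
`f'(0) = 1 - 1/(e - 1) - 1/e > 0`, and `f''(z) = e^{-z}/(e - 1) - e^{z-1}` is nonnegative exactly
for `z ≤ c := (1 - log (e - 1))/2 ∈ [0, 1]`. On `[0, c]` the derivative `f'` is nondecreasing and
starts positive, so `f` increases from `f(0) = 0`; on `[c, 1]` the function `f` is concave, so it
stays above `min (f c) (f 1) ≥ 0`.
-/

open Real Set

section ConvexThenConcave

variable {f f' f'' : ℝ → ℝ} {a b c : ℝ}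

lemma monotoneOn_Icc_of_hasDerivAt_of_deriv2_nonneg
    (hf : ∀ x ∈ Icc a c, HasDerivAt f (f' x) x) (hf' : ∀ x ∈ Icc a c, HasDerivAt f' (f'' x) x)
    (hf'' : ∀ x ∈ Ioo a c, 0 ≤ f'' x) (hf'a : 0 ≤ f' a) : MonotoneOn f (Icc a c) := by
  have hf'_mono : MonotoneOn f' (Icc a c) :=
    monotoneOn_of_hasDerivWithinAt_nonneg (convex_Icc a c)
      (fun x hx ↦ (hf' x hx).continuousAt.continuousWithinAt)
      (fun x hx ↦ (hf' x (interior_subset hx)).hasDerivWithinAt)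
      (fun x hx ↦ hf'' x (by rwa [interior_Icc] at hx))
  refine monotoneOn_of_hasDerivWithinAt_nonneg (convex_Icc a c)
    (fun x hx ↦ (hf x hx).continuousAt.continuousWithinAt)
    (fun x hx ↦ (hf x (interior_subset hx)).hasDerivWithinAt) fun x hx ↦ ?_
  rw [interior_Icc] at hx
  exact hf'a.trans
    (hf'_mono (left_mem_Icc.2 (hx.1.le.trans hx.2.le)) (Ioo_subset_Icc_self hx) hx.1.le)

lemma concaveOn_Icc_of_hasDerivAt_of_deriv2_nonpos
    (hf : ∀ x ∈ Icc c b, HasDerivAt f (f' x) x) (hf' : ∀ x ∈ Icc c b, HasDerivAt f' (f'' x) x)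
    (hf'' : ∀ x ∈ Ioo c b, f'' x ≤ 0) : ConcaveOn ℝ (Icc c b) f :=
  concaveOn_of_hasDerivWithinAt2_nonpos (convex_Icc c b)
    (fun x hx ↦ (hf x hx).continuousAt.continuousWithinAt)
    (fun x hx ↦ (hf x (interior_subset hx)).hasDerivWithinAt)
    (fun x hx ↦ (hf' x (interior_subset hx)).hasDerivWithinAt)
    (fun x hx ↦ hf'' x (by rwa [interior_Icc] at hx))

lemma nonneg_on_Icc_of_convex_then_concave (hac : a ≤ c) (hcb : c ≤ b)
    (hf : ∀ x ∈ Icc a b, HasDerivAt f (f' x) x) (hf' : ∀ x ∈ Icc a b, HasDerivAt f' (f'' x) x)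
    (hconvex : ∀ x ∈ Ioo a c, 0 ≤ f'' x) (hconcave : ∀ x ∈ Ioo c b, f'' x ≤ 0)
    (hfa : 0 ≤ f a) (hfb : 0 ≤ f b) (hf'a : 0 ≤ f' a) : ∀ x ∈ Icc a b, 0 ≤ f x := by
  have hleft : Icc a c ⊆ Icc a b := Icc_subset_Icc_right hcb
  have hright : Icc c b ⊆ Icc a b := Icc_subset_Icc_left hac
  have hmono := monotoneOn_Icc_of_hasDerivAt_of_deriv2_nonneg (fun x hx ↦ hf x (hleft hx))
    (fun x hx ↦ hf' x (hleft hx)) hconvex hf'a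
  have hconc := concaveOn_Icc_of_hasDerivAt_of_deriv2_nonpos (fun x hx ↦ hf x (hright hx))
    (fun x hx ↦ hf' x (hright hx)) hconcave
  have hleft_nonneg : ∀ x ∈ Icc a c, 0 ≤ f x := fun x hx ↦
    hfa.trans (hmono (left_mem_Icc.2 hac) hx hx.1)
  intro x hx
  rcases le_total x c with hxc | hcx
  · exact hleft_nonneg x ⟨hx.1, hxc⟩
  · exact (le_min (hleft_nonneg c (right_mem_Icc.2 hac)) hfb).trans
      (hconc.min_le_of_mem_Icc (left_mem_Icc.2 hcb) (right_mem_Icc.2 hcb) ⟨hcx, hx.2⟩)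

end ConvexThenConcave

lemma one_le_exp_one_sub_one : 1 ≤ exp 1 - 1 := by
  linarith [add_one_le_exp (1 : ℝ)]

lemma exp_one_sub_one_pos : 0 < exp 1 - 1 :=
  one_pos.trans_le one_le_exp_one_sub_one

lemma log_exp_one_sub_one_mem_Icc : log (exp 1 - 1) ∈ Icc (0 : ℝ) 1 :=
  ⟨log_nonneg one_le_exp_one_sub_one,
    by simpa using log_le_log exp_one_sub_one_pos (sub_le_self (exp 1) zero_le_one)⟩

noncomputable def rankingSlack (z : ℝ) : ℝ :=
  z - (1 - exp (-z)) / (exp 1 - 1) - (exp (z - 1) - exp (-1))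

noncomputable def rankingSlackDeriv (z : ℝ) : ℝ :=
  1 - exp (-z) / (exp 1 - 1) - exp (z - 1)

lemma hasDerivAt_rankingSlack (z : ℝ) : HasDerivAt rankingSlack (rankingSlackDeriv z) z :=
  (((hasDerivAt_id' z).fun_sub (((hasDerivAt_neg z).exp.const_sub 1).div_const _)).fun_sub
    (((hasDerivAt_id' z).sub_const 1).exp.sub_const _)).congr_deriv (by rw [rankingSlackDeriv]; ring)

lemma hasDerivAt_rankingSlackDeriv (z : ℝ) :
    HasDerivAt rankingSlackDeriv (exp (-z) / (exp 1 - 1) - exp (z - 1)) z :=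
  ((((hasDerivAt_neg z).exp.div_const _).const_sub 1).fun_sub
    ((hasDerivAt_id' z).sub_const 1).exp).congr_deriv (by ring)

lemma deriv2_rankingSlack_nonneg_iff {z : ℝ} :
    0 ≤ exp (-z) / (exp 1 - 1) - exp (z - 1) ↔ z ≤ (1 - log (exp 1 - 1)) / 2 := by
  rw [← exp_log exp_one_sub_one_pos, ← exp_sub, exp_log exp_one_sub_one_pos, sub_nonneg,
    exp_le_exp]
  constructor <;> intro h <;> linarith

lemma rankingSlack_zero : rankingSlack 0 = 0 := by
  simp [rankingSlack]

lemma rankingSlack_one : rankingSlack 1 = 0 := by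
  have he : exp 1 - 1 ≠ 0 := exp_one_sub_one_pos.ne'
  rw [rankingSlack, sub_self, exp_zero, exp_neg]
  field_simp
  ring

/-- This amounts to `e ^ 2 - 3 * e + 1 > 0`, i.e. `e > (3 + √5) / 2 ≈ 2.618`. -/
lemma rankingSlackDeriv_zero_pos : 0 < rankingSlackDeriv 0 := by
  have he := exp_one_gt_d9
  have hsum : exp (-0) / (exp 1 - 1) + exp (0 - 1) = (2 * exp 1 - 1) / (exp 1 * (exp 1 - 1)) := by
    have he1 : exp 1 - 1 ≠ 0 := exp_one_sub_one_pos.ne'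
    rw [neg_zero, exp_zero, zero_sub, exp_neg]
    field_simp
    ring
  rw [rankingSlackDeriv, sub_sub, sub_pos, hsum, div_lt_one (by nlinarith)]
  nlinarith

lemma rankingSlack_nonneg {z : ℝ} (hz : z ∈ Icc (0 : ℝ) 1) : 0 ≤ rankingSlack z := by
  obtain ⟨hlog_nonneg, hlog_le_one⟩ := log_exp_one_sub_one_mem_Icc
  exact nonneg_on_Icc_of_convex_then_concave (c := (1 - log (exp 1 - 1)) / 2)
    (by linarith) (by linarith) (fun z _ ↦ hasDerivAt_rankingSlack z)
    (fun z _ ↦ hasDerivAt_rankingSlackDeriv z)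
    (fun z hz ↦ deriv2_rankingSlack_nonneg_iff.2 hz.2.le)
    (fun z hz ↦ (not_le.1 (mt deriv2_rankingSlack_nonneg_iff.1 hz.1.not_ge)).le)
    rankingSlack_zero.ge rankingSlack_one.ge rankingSlackDeriv_zero_pos.le z hz

/-- For `z ∈ [0,1]`, `z - (1 - e^{-z})/(e-1) - (e^{z-1} - e^{-1}) ≥ 0`,
with equality at `z = 0` and `z = 1`. -/
theorem ranking_key_scalar_inequality :
    (∀ z ∈ Set.Icc (0 : ℝ) 1,
      z - (1 - Real.exp (-z)) / (Real.exp 1 - 1)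
        - (Real.exp (z - 1) - Real.exp (-1)) ≥ 0) ∧
    (0 : ℝ) - (1 - Real.exp (-(0 : ℝ))) / (Real.exp 1 - 1)
        - (Real.exp ((0 : ℝ) - 1) - Real.exp (-1)) = 0 ∧
    (1 : ℝ) - (1 - Real.exp (-(1 : ℝ))) / (Real.exp 1 - 1)
        - (Real.exp ((1 : ℝ) - 1) - Real.exp (-1)) = 0 :=
  ⟨fun _ hz ↦ rankingSlack_nonneg hz, rankingSlack_zero, rankingSlack_one⟩
end

section
/- For every z ∈ [0,1] and every μ ∈ [0, 1/(e−1)]: ((e−1)/e) · ( z − (1 − e^{−z}) μ ) / ( 1 − (1 − e^{−1}) μ ) − ( e^{z−1} − e^{−1} ) ≥ 0. (Note that the denominator 1 − (1 − e^{−1})μ is positive for such μ.) -/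
/-!
The left-hand side is `N(μ) / (e · (1 - (1 - e⁻¹) μ))` with a positive denominator and a
numerator `N` affine in `μ`, so it suffices to check `N ≥ 0` at the two ends of the range of `μ`.
At `μ = 0` this is the chord bound `e^z ≤ 1 + (e - 1) z` for the convex function `exp` on
`[0, 1]`. At `μ = 1/(e - 1)` it is `g(z) ≥ 0` for
`g(z) = z - (1 - e^{-z})/(e - 1) - (e^{z-1} - e^{-1})`, which vanishes at `0` and `1`. Its
derivative `g'` is concave with `g'(0) > 0`, so `g'` is positive and then negative on `[0, 1]`:
`g` first increases, then decreases, and stays above `min (g 0) (g 1) = 0`.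
-/

open Real Set

theorem min_le_of_concaveOn_deriv {f f' : ℝ → ℝ} {a b x : ℝ}
    (hf : ∀ y ∈ Icc a b, HasDerivAt f (f' y) y) (hf' : ConcaveOn ℝ (Icc a b) f')
    (ha : 0 ≤ f' a) (hx : x ∈ Icc a b) : min (f a) (f b) ≤ f x := by
  have hcont : ContinuousOn f (Icc a b) := fun y hy => (hf y hy).continuousAt.continuousWithinAt
  have hdiff : ∀ s ⊆ Icc a b, DifferentiableOn ℝ f (interior s) := fun s hs y hy =>
    (hf y (hs (interior_subset hy))).differentiableAt.differentiableWithinAt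
  have hsub₁ : Icc a x ⊆ Icc a b := Icc_subset_Icc le_rfl hx.2
  have hsub₂ : Icc x b ⊆ Icc a b := Icc_subset_Icc hx.1 le_rfl
  have ha_mem : a ∈ Icc a b := left_mem_Icc.2 (hx.1.trans hx.2)
  by_cases hfx : 0 ≤ f' x
  · refine (min_le_left _ _).trans <| monotoneOn_of_deriv_nonneg (convex_Icc a x)
      (hcont.mono hsub₁) (hdiff _ hsub₁) ?_ (left_mem_Icc.2 hx.1) (right_mem_Icc.2 hx.1) hx.1
    intro y hy
    rw [interior_Icc] at hy
    rw [(hf y (hsub₁ (Ioo_subset_Icc_self hy))).deriv]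
    exact (le_min ha hfx).trans (hf'.min_le_of_mem_Icc ha_mem hx (Ioo_subset_Icc_self hy))
  · refine (min_le_right _ _).trans <| antitoneOn_of_deriv_nonpos (convex_Icc x b)
      (hcont.mono hsub₂) (hdiff _ hsub₂) ?_ (left_mem_Icc.2 hx.2) (right_mem_Icc.2 hx.2) hx.2
    intro y hy
    rw [interior_Icc] at hy
    have hy_mem := hsub₂ (Ioo_subset_Icc_self hy)
    rw [(hf y hy_mem).deriv]
    by_contra! hfy
    exact hfx ((le_min ha hfy.le).trans (hf'.min_le_of_mem_Icc ha_mem hy_mem ⟨hx.1, hy.1.le⟩))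

theorem convexOn_exp_neg : ConvexOn ℝ univ (fun t : ℝ => exp (-t)) :=
  convexOn_exp.comp_linearMap (-LinearMap.id)

theorem exp_le_one_add_mul_of_mem_Icc {z : ℝ} (hz : z ∈ Icc (0 : ℝ) 1) :
    exp z ≤ 1 + (exp 1 - 1) * z := by
  have h := convexOn_exp.2 (mem_univ 0) (mem_univ 1) (sub_nonneg.2 hz.2) hz.1 (sub_add_cancel 1 z)
  simp only [smul_eq_mul, mul_zero, mul_one, zero_add, exp_zero] at h
  linarith

noncomputable def starBound (z : ℝ) : ℝ :=
  z - (1 - exp (-z)) / (exp 1 - 1) - (exp (z - 1) - exp (-1))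

noncomputable def starBoundDeriv (z : ℝ) : ℝ :=
  1 - (exp 1 - 1)⁻¹ * exp (-z) - exp (-1) * exp z

theorem hasDerivAt_starBound (z : ℝ) : HasDerivAt starBound (starBoundDeriv z) z := by
  have h : HasDerivAt starBound _ z :=
    ((hasDerivAt_id z).sub (((hasDerivAt_neg z).exp.const_sub 1).div_const (exp 1 - 1))).sub
      (((hasDerivAt_id z).sub_const 1).exp.sub_const (exp (-1)))
  refine h.congr_deriv ?_
  simp only [starBoundDeriv, id, exp_sub, exp_neg]
  ring

theorem concaveOn_starBoundDeriv : ConcaveOn ℝ univ starBoundDeriv :=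
  ((concaveOn_const 1 convex_univ).sub (convexOn_exp_neg.smul (inv_nonneg.2
    (sub_nonneg.2 (one_le_exp zero_le_one))))).sub (convexOn_exp.smul (exp_pos _).le)

/-- This is where a numerical value of `e` enters: `(e - 1)⁻¹ + e⁻¹ ≤ 1` needs `e ≥ (3 + √5)/2`. -/
theorem starBoundDeriv_zero_nonneg : 0 ≤ starBoundDeriv 0 := by
  have he := exp_one_gt_d9
  have h₁ : (exp 1 - 1)⁻¹ ≤ 0.59 := inv_le_of_inv_le₀ (by norm_num) (by norm_num; linarith)
  have h₂ : (exp 1)⁻¹ ≤ 0.37 := inv_le_of_inv_le₀ (by norm_num) (by norm_num; linarith)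
  rw [starBoundDeriv, neg_zero, exp_zero, mul_one, mul_one, exp_neg]
  linarith

theorem starBound_zero : starBound 0 = 0 := by
  simp [starBound]

theorem starBound_one : starBound 1 = 0 := by
  have : exp 1 - 1 ≠ 0 := by linarith [add_one_lt_exp one_ne_zero]
  simp only [starBound, sub_self, exp_zero, exp_neg]
  field_simp
  ring

theorem starBound_nonneg {z : ℝ} (hz : z ∈ Icc (0 : ℝ) 1) : 0 ≤ starBound z := by
  simpa [starBound_zero, starBound_one] using min_le_of_concaveOn_deriv
    (fun y _ => hasDerivAt_starBound y)
    (concaveOn_starBoundDeriv.subset (subset_univ _) (convex_Icc 0 1))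
    starBoundDeriv_zero_nonneg hz

theorem star_lhs_eq (z μ : ℝ) (hD : 1 - (1 - exp (-1)) * μ ≠ 0) :
    (exp 1 - 1) / exp 1 * ((z - (1 - exp (-z)) * μ) / (1 - (1 - exp (-1)) * μ))
        - (exp (z - 1) - exp (-1))
      = ((1 - (exp 1 - 1) * μ) * (1 + (exp 1 - 1) * z - exp z)
          + (exp 1 - 1) ^ 2 * μ * starBound z) / (exp 1 * (1 - (1 - exp (-1)) * μ)) := by
  have he : exp 1 - 1 ≠ 0 := by linarith [add_one_lt_exp one_ne_zero]
  have hexp₁ : exp (z - 1) = exp z * exp (-1) := by rw [sub_eq_add_neg, exp_add]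
  have hexp₂ : exp 1 * exp (-1) = 1 := by rw [← exp_add, add_neg_cancel, exp_zero]
  rw [div_mul_div_comm, div_sub' (mul_ne_zero (exp_pos 1).ne' hD), starBound]
  congr 1
  field_simp
  rw [hexp₁]
  linear_combination (exp z - 1) * (exp 1 * μ - 1 - μ - μ * exp (-1)) * hexp₂

/-- The inequality `(★)` in the proof of Lemma `left` of the Ranking
analysis. -/
theorem ranking_star_inequality :
    ∀ z ∈ Set.Icc (0 : ℝ) 1, ∀ μ ∈ Set.Icc (0 : ℝ) (1 / (Real.exp 1 - 1)),
      (Real.exp 1 - 1) / Real.exp 1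
          * ((z - (1 - Real.exp (-z)) * μ) / (1 - (1 - Real.exp (-1)) * μ))
        - (Real.exp (z - 1) - Real.exp (-1)) ≥ 0 := by
  rintro z hz μ ⟨hμ0, hμ1⟩
  have he := exp_one_gt_d9
  have hμe : (exp 1 - 1) * μ ≤ 1 := by
    rwa [le_div_iff₀ (by linarith), mul_comm] at hμ1
  have hD : 0 < 1 - (1 - exp (-1)) * μ := by
    nlinarith [mul_nonneg (exp_pos (-1)).le hμ0]
  rw [star_lhs_eq z μ hD.ne', ge_iff_le]
  refine div_nonneg (add_nonneg (mul_nonneg (sub_nonneg.2 hμe) ?_) ?_) (mul_pos (exp_pos 1) hD).le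
  · linarith [exp_le_one_add_mul_of_mem_Icc hz]
  · exact mul_nonneg (by positivity) (starBound_nonneg hz)
end

section
/- Let a, b ≥ 0 be reals with a + b ≤ 1, and define F : [0,1] → ℝ by F(z) = (1 − z) e^{−1} + a·( (1 − e^{z−1})(1 − e^{−1}) + (e^{z−1} − e^{−1}) ) + b·(1 − e^{−z}). Then for every z ∈ [0,1]: F(z) ≥ min{ F(0), F(1) }. -/
/-!
`F` is differentiable with `F' z = a e^{z-2} + b e^{-z} - e^{-1}`, a convex function with
`F' 1 = (a + b - 1) / e ≤ 0`. A convex function that is nonpositive at the right end of an interval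
is nonpositive on `[z, 1]` as soon as it is nonpositive at `z`, and nonnegative on `[0, z]`
otherwise; so `F` decreases from `z` to `1` or increases from `0` to `z`.
-/

open Real Set

theorem min_le_of_hasDerivAt_of_convexOn {f f' : ℝ → ℝ} {x y z : ℝ}
    (hf : ∀ t ∈ Icc x y, HasDerivAt f (f' t) t) (hf' : ConvexOn ℝ (Icc x y) f')
    (hy : f' y ≤ 0) (hz : z ∈ Icc x y) : min (f x) (f y) ≤ f z := by
  obtain ⟨hxz, hzy⟩ := hz
  have hxy := hxz.trans hzy
  have hcont : ∀ {u v}, Icc u v ⊆ Icc x y → ContinuousOn f (Icc u v) := fun h t ht ↦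
    (hf t (h ht)).continuousAt.continuousWithinAt
  have hderiv : ∀ {u v}, Icc u v ⊆ Icc x y → ∀ t ∈ interior (Icc u v),
      HasDerivWithinAt f (f' t) (interior (Icc u v)) t := fun h t ht ↦
    (hf t (h (interior_subset ht))).hasDerivWithinAt
  rcases le_or_gt (f' z) 0 with hz | hz
  · have hsub : Icc z y ⊆ Icc x y := Icc_subset_Icc_left hxz
    have hanti : AntitoneOn f (Icc z y) :=
      antitoneOn_of_hasDerivWithinAt_nonpos (convex_Icc z y) (hcont hsub) (hderiv hsub)
        fun t ht ↦ by
          rw [interior_Icc] at ht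
          exact (hf'.le_on_segment ⟨hxz, hzy⟩ ⟨hxy, le_rfl⟩
            (segment_eq_Icc hzy ▸ Ioo_subset_Icc_self ht)).trans (max_le hz hy)
    exact min_le_of_right_le (hanti ⟨le_rfl, hzy⟩ ⟨hzy, le_rfl⟩ hzy)
  · have hsub : Icc x z ⊆ Icc x y := Icc_subset_Icc_right hzy
    have hmono : MonotoneOn f (Icc x z) :=
      monotoneOn_of_hasDerivWithinAt_nonneg (convex_Icc x z) (hcont hsub) (hderiv hsub)
        fun t ht ↦ by
          rw [interior_Icc] at ht
          by_contra! ht'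
          have hzt : z ∈ segment ℝ t y := segment_eq_Icc (ht.2.le.trans hzy) ▸ ⟨ht.2.le, hzy⟩
          have := hf'.le_on_segment ⟨ht.1.le, ht.2.le.trans hzy⟩ ⟨hxy, le_rfl⟩ hzt
          exact hz.not_ge (this.trans (max_le ht'.le hy))
    exact min_le_of_left_le (hmono ⟨le_rfl, hxz⟩ ⟨hxz, le_rfl⟩ hxz)

theorem convexOn_mul_exp_add_mul_exp_neg {a b : ℝ} (ha : 0 ≤ a) (hb : 0 ≤ b) (c d : ℝ) :
    ConvexOn ℝ univ fun t ↦ a * exp (t - c) + b * exp (-t) - d := by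
  have hshift : ConvexOn ℝ univ fun t ↦ exp (t - c) := by
    simpa [Function.comp_def, sub_eq_add_neg] using convexOn_exp.translate_left (-c)
  have hneg : ConvexOn ℝ univ fun t ↦ exp (-t) := by
    simpa [Function.comp_def] using convexOn_exp.comp_linearMap (-LinearMap.id)
  exact (((hshift.smul ha).add (hneg.smul hb)).add_const (-d)).congr fun t _ ↦ by
    simp [sub_eq_add_neg]

theorem hasDerivAt_ranking (a b t : ℝ) :
    HasDerivAt (fun z ↦ (1 - z) * exp (-1)
        + a * ((1 - exp (z - 1)) * (1 - exp (-1)) + (exp (z - 1) - exp (-1)))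
        + b * (1 - exp (-z)))
      (a * exp (t - 2) + b * exp (-t) - exp (-1)) t := by
  have hshift : HasDerivAt (fun z ↦ exp (z - 1)) (exp (t - 1)) t := by
    simpa using ((hasDerivAt_id t).sub_const 1).exp
  have hneg : HasDerivAt (fun z ↦ exp (-z)) (-exp (-t)) t := by
    simpa using (hasDerivAt_id t).neg.exp
  refine (((((hasDerivAt_id t).const_sub 1).mul_const (exp (-1))).add
    ((((hshift.const_sub 1).mul_const (1 - exp (-1))).add (hshift.sub_const _)).const_mul a)).add
    ((hneg.const_sub 1).const_mul b)).congr_deriv ?_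
  rw [show t - 2 = (t - 1) + -1 by ring, exp_add]
  ring

/-- Lemma `mid` of the Ranking analysis: the dual-feasibility expression as a
function of `z` is minimized at `z = 0` or `z = 1`. -/
theorem ranking_mid_lemma
    (a b : ℝ) (ha : 0 ≤ a) (hb : 0 ≤ b) (hab : a + b ≤ 1)
    (F : ℝ → ℝ)
    (hF : ∀ z : ℝ, F z =
      (1 - z) * Real.exp (-1)
        + a * ((1 - Real.exp (z - 1)) * (1 - Real.exp (-1))
                 + (Real.exp (z - 1) - Real.exp (-1)))
        + b * (1 - Real.exp (-z))) :
    ∀ z ∈ Set.Icc (0 : ℝ) 1, F z ≥ min (F 0) (F 1) := by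
  obtain rfl := funext hF
  have hderiv_one : a * exp (1 - 2) + b * exp (-1) - exp (-1) ≤ 0 :=
    calc a * exp (1 - 2) + b * exp (-1) - exp (-1) = (a + b - 1) * exp (-1) := by norm_num; ring
      _ ≤ 0 := mul_nonpos_of_nonpos_of_nonneg (by linarith) (exp_pos _).le
  exact fun z hz ↦ min_le_of_hasDerivAt_of_convexOn (fun t _ ↦ hasDerivAt_ranking a b t)
    ((convexOn_mul_exp_add_mul_exp_neg ha hb 2 _).subset (subset_univ _) (convex_Icc 0 1))
    hderiv_one hz
end

section
/- Let g : [0,∞) → [0,1] be nondecreasing, let ℓ ≥ 0 and let h ∈ [0, ℓ] satisfy h·(1 − g(ℓ)) ≥ ∫_h^ℓ (1 − g(z)) dz. Then for every θ ∈ [h, ℓ]: θ·(1 − g(ℓ)) − ∫_θ^ℓ (1 − g(z)) dz ≥ 0. -/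
open MeasureTheory Real

/-- If `h (1 - g ℓ) ≥ ∫_h^ℓ (1 - g z) dz` then for every `θ ∈ [h, ℓ]` we have
`θ (1 - g ℓ) - ∫_θ^ℓ (1 - g z) dz ≥ 0`. -/
theorem drop_positive_part_on_interval
    (g : ℝ → ℝ) (hg : MonotoneOn g (Set.Ici 0))
    (hrange : ∀ x ∈ Set.Ici (0 : ℝ), g x ∈ Set.Icc (0 : ℝ) 1)
    (ℓ h : ℝ) (hℓ : 0 ≤ ℓ) (hh : h ∈ Set.Icc (0 : ℝ) ℓ)
    (hkey : h * (1 - g ℓ) ≥ ∫ z in h..ℓ, (1 - g z)) :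
    ∀ θ ∈ Set.Icc h ℓ, θ * (1 - g ℓ) - (∫ z in θ..ℓ, (1 - g z)) ≥ 0 := by
  intro θ hθ
  obtain ⟨hhθ, hθℓ⟩ := hθ
  obtain ⟨hh0, hhℓ⟩ := hh
  have hθ0 : (0:ℝ) ≤ θ := le_trans hh0 hhθ
  -- integrability
  have hmono : ∀ a b : ℝ, 0 ≤ a → 0 ≤ b → IntervalIntegrable (fun z => 1 - g z) volume a b := by
    intro a b ha hb
    apply IntervalIntegrable.sub intervalIntegrable_const
    apply MonotoneOn.intervalIntegrable
    intro x hx y hy hxy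
    exact hg (le_trans (le_min ha hb) hx.1) (le_trans (le_min ha hb) hy.1) hxy
  have hint1 : IntervalIntegrable (fun z => 1 - g z) volume h θ := hmono h θ hh0 hθ0
  have hint2 : IntervalIntegrable (fun z => 1 - g z) volume θ ℓ := hmono θ ℓ hθ0 hℓ
  have hsplit : (∫ z in h..θ, (1 - g z)) + (∫ z in θ..ℓ, (1 - g z)) = ∫ z in h..ℓ, (1 - g z) :=
    intervalIntegral.integral_add_adjacent_intervals hint1 hint2
  have hnn : (0:ℝ) ≤ ∫ z in h..θ, (1 - g z) := by
    apply intervalIntegral.integral_nonneg hhθ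
    intro u hu
    have : g u ≤ 1 := (hrange u (le_trans hh0 hu.1)).2
    linarith
  have hgl : g ℓ ≤ 1 := (hrange ℓ hℓ).2
  have h1 : h * (1 - g ℓ) ≤ θ * (1 - g ℓ) := by
    apply mul_le_mul_of_nonneg_right hhθ
    linarith
  linarith
end

section
/- Sufficiency of the closed-form lower bound (general case): let g : [0,∞) → [0,1] be nondecreasing, let ℓ ≥ 0 and let h ∈ [0, ℓ] satisfy h·(1 − g(ℓ)) ≥ ∫_h^ℓ (1 − g(z)) dz. Then ∫_0^ℓ e^{−θ} g(θ) dθ + ∫_0^∞ e^{−θ} ( θ(1 − g(ℓ)) − ∫_{min{θ,ℓ}}^ℓ (1 − g(z)) dz )^+ dθ ≥ ∫_0^ℓ e^{−θ} g(θ) dθ − ∫_h^ℓ ( e^{−h} − e^{−z} )(1 − g(z)) dz + (1 + h) e^{−h} (1 − g(ℓ)). -/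
/-!
Write `u = 1 - g`, `c = 1 - g ℓ` and `F θ = θ c - ∫_{min θ ℓ}^ℓ u`. Discarding the range
`(0, h]` and then the positive part can only decrease `∫_0^∞ e^{-θ} F(θ)^+`, and
`∫_h^∞ e^{-θ} F(θ) dθ` is computed exactly: the linear part gives `(1 + h) e^{-h} c`, and since
`F θ = θ c` for `θ ≥ ℓ` the rest is `∫_h^ℓ e^{-θ} ∫_θ^ℓ u`, which Fubini turns into
`∫_h^ℓ (e^{-h} - e^{-z}) u(z) dz`.
-/

open MeasureTheory Real Set

theorem intervalIntegral.integral_mul_integral_eq_integral_integral_mul {f u : ℝ → ℝ}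
    {a b : ℝ} (hab : a ≤ b) (hf : IntervalIntegrable f volume a b)
    (hu : IntervalIntegrable u volume a b) :
    ∫ θ in a..b, f θ * ∫ z in θ..b, u z = ∫ z in a..b, (∫ θ in a..z, f θ) * u z := by
  rw [intervalIntegrable_iff_integrableOn_Ioc_of_le hab] at hf hu
  let K : ℝ → ℝ → ℝ := fun θ z =>
    {p : ℝ × ℝ | p.1 < p.2}.indicator (fun p => f p.1 * u p.2) (θ, z)
  have hK : Integrable (Function.uncurry K)
      ((volume.restrict (Ioc a b)).prod (volume.restrict (Ioc a b))) :=
    (hf.mul_prod hu).indicator (measurableSet_lt measurable_fst measurable_snd)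
  have inner : ∀ θ ∈ Ioc a b, ∫ z in Ioc a b, K θ z = f θ * ∫ z in θ..b, u z := by
    intro θ hθ
    have hKθ : K θ = (Ioi θ).indicator (fun z => f θ * u z) := by
      ext z; simp [K, indicator_apply]
    rw [hKθ, setIntegral_indicator measurableSet_Ioi, Ioc_inter_Ioi, max_eq_right hθ.1.le,
      MeasureTheory.integral_const_mul, intervalIntegral.integral_of_le hθ.2]
  have outer : ∀ z ∈ Ioc a b, ∫ θ in Ioc a b, K θ z = (∫ θ in a..z, f θ) * u z := by
    intro z hz
    have hKz : (fun θ => K θ z) = (Iio z).indicator (fun θ => f θ * u z) := by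
      ext θ; simp [K, indicator_apply]
    have hset : Ioc a b ∩ Iio z = Ioo a z := by
      ext θ; simp only [mem_inter_iff, mem_Ioc, mem_Iio, mem_Ioo]; grind
    rw [hKz, setIntegral_indicator measurableSet_Iio, hset, ← integral_Ioc_eq_integral_Ioo,
      MeasureTheory.integral_mul_const, intervalIntegral.integral_of_le hz.1.le]
  rw [intervalIntegral.integral_of_le hab, intervalIntegral.integral_of_le hab,
    ← setIntegral_congr_fun measurableSet_Ioc inner,
    ← setIntegral_congr_fun measurableSet_Ioc outer, integral_integral_swap hK]

theorem integral_exp_neg (a b : ℝ) : ∫ x in a..b, exp (-x) = exp (-a) - exp (-b) := by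
  simp [intervalIntegral.integral_comp_neg]

theorem hasDerivAt_neg_one_add_mul_exp_neg (x : ℝ) :
    HasDerivAt (fun t => -(1 + t) * exp (-t)) (x * exp (-x)) x :=
  ((((hasDerivAt_id x).const_add 1).neg).mul (hasDerivAt_neg x).exp).congr_deriv
    (by simp only [id, Pi.neg_apply]; ring)

theorem tendsto_neg_one_add_mul_exp_neg_atTop :
    Filter.Tendsto (fun t => -(1 + t) * exp (-t)) Filter.atTop (nhds 0) := by
  have := ((tendsto_pow_mul_exp_neg_atTop_nhds_zero 0).add
    (tendsto_pow_mul_exp_neg_atTop_nhds_zero 1)).neg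
  simp only [pow_zero, pow_one, one_mul, add_zero, neg_zero] at this
  convert this using 2
  ring

theorem integrableOn_Ioi_mul_exp_neg {a : ℝ} (ha : 0 ≤ a) :
    IntegrableOn (fun x => x * exp (-x)) (Ioi a) :=
  integrableOn_Ioi_deriv_of_nonneg' (fun x _ => hasDerivAt_neg_one_add_mul_exp_neg x)
    (fun _ hx => mul_nonneg (ha.trans hx.out.le) (exp_pos _).le)
    tendsto_neg_one_add_mul_exp_neg_atTop

theorem integral_Ioi_mul_exp_neg {a : ℝ} (ha : 0 ≤ a) :
    ∫ x in Ioi a, x * exp (-x) = (1 + a) * exp (-a) := by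
  rw [integral_Ioi_of_hasDerivAt_of_nonneg' (fun x _ => hasDerivAt_neg_one_add_mul_exp_neg x)
    (fun x hx => mul_nonneg (ha.trans hx.out.le) (exp_pos _).le)
    tendsto_neg_one_add_mul_exp_neg_atTop]
  ring

section TailIntegral

variable {u : ℝ → ℝ} {c h ℓ : ℝ}

theorem exp_neg_mul_sub_integral_min_eq (u : ℝ → ℝ) (c ℓ θ : ℝ) :
    exp (-θ) * (θ * c - ∫ z in min θ ℓ..ℓ, u z)
      = c * (θ * exp (-θ)) - (Iic ℓ).indicator (fun θ => exp (-θ) * ∫ z in θ..ℓ, u z) θ := by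
  rcases le_or_gt θ ℓ with hθ | hθ
  · rw [min_eq_left hθ, indicator_of_mem (mem_Iic.2 hθ)]
    ring
  · rw [min_eq_right hθ.le, indicator_of_notMem (notMem_Iic.2 hθ), intervalIntegral.integral_same]
    ring

theorem integrableOn_Ioi_indicator_Iic_exp_neg_mul_integral (hu : IntegrableOn u (Icc h ℓ))
    (hhℓ : h ≤ ℓ) :
    IntegrableOn ((Iic ℓ).indicator fun θ => exp (-θ) * ∫ z in θ..ℓ, u z) (Ioi h) := by
  rw [integrableOn_indicator_iff measurableSet_Iic, inter_comm, Ioi_inter_Iic]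
  rw [← uIcc_of_le hhℓ] at hu
  have hG := intervalIntegral.continuousOn_primitive_interval_left hu
  rw [uIcc_of_le hhℓ] at hG
  exact ((continuous_exp.comp continuous_neg).continuousOn.mul hG).integrableOn_Icc.mono_set
    Ioc_subset_Icc_self

theorem integrableOn_Ioi_exp_neg_mul_sub_integral_min (hu : IntegrableOn u (Icc h ℓ))
    (hh : 0 ≤ h) (hhℓ : h ≤ ℓ) :
    IntegrableOn (fun θ => exp (-θ) * (θ * c - ∫ z in min θ ℓ..ℓ, u z)) (Ioi h) := by
  simp_rw [exp_neg_mul_sub_integral_min_eq]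
  exact ((integrableOn_Ioi_mul_exp_neg hh).const_mul c).sub
    (integrableOn_Ioi_indicator_Iic_exp_neg_mul_integral hu hhℓ)

theorem integral_Ioi_exp_neg_mul_sub_integral_min (hu : IntegrableOn u (Icc h ℓ))
    (hh : 0 ≤ h) (hhℓ : h ≤ ℓ) :
    ∫ θ in Ioi h, exp (-θ) * (θ * c - ∫ z in min θ ℓ..ℓ, u z)
      = (1 + h) * exp (-h) * c - ∫ z in h..ℓ, (exp (-h) - exp (-z)) * u z := by
  simp_rw [exp_neg_mul_sub_integral_min_eq]
  rw [integral_sub ((integrableOn_Ioi_mul_exp_neg hh).const_mul c)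
      (integrableOn_Ioi_indicator_Iic_exp_neg_mul_integral hu hhℓ),
    integral_const_mul, integral_Ioi_mul_exp_neg hh, setIntegral_indicator measurableSet_Iic,
    Ioi_inter_Iic, ← intervalIntegral.integral_of_le hhℓ,
    intervalIntegral.integral_mul_integral_eq_integral_integral_mul (f := fun x => exp (-x)) hhℓ
      ((continuous_exp.comp continuous_neg).intervalIntegrable h ℓ)
      ((intervalIntegrable_iff_integrableOn_Ioc_of_le hhℓ).2 (hu.mono_set Ioc_subset_Icc_self))]
  simp_rw [integral_exp_neg]
  ring

theorem le_integral_Ioi_exp_neg_mul_max_sub_integral_min (hu : IntegrableOn u (Icc 0 ℓ))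
    (hh : 0 ≤ h) (hhℓ : h ≤ ℓ) :
    (1 + h) * exp (-h) * c - ∫ z in h..ℓ, (exp (-h) - exp (-z)) * u z
      ≤ ∫ θ in Ioi 0, exp (-θ) * max (θ * c - ∫ z in min θ ℓ..ℓ, u z) 0 := by
  have hpos : IntegrableOn (fun θ => max (exp (-θ) * (θ * c - ∫ z in min θ ℓ..ℓ, u z)) 0)
      (Ioi 0) :=
    (integrableOn_Ioi_exp_neg_mul_sub_integral_min hu le_rfl (hh.trans hhℓ)).pos_part
  calc (1 + h) * exp (-h) * c - ∫ z in h..ℓ, (exp (-h) - exp (-z)) * u z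
      = ∫ θ in Ioi h, exp (-θ) * (θ * c - ∫ z in min θ ℓ..ℓ, u z) :=
        (integral_Ioi_exp_neg_mul_sub_integral_min (hu.mono_set (Icc_subset_Icc_left hh))
          hh hhℓ).symm
    _ ≤ ∫ θ in Ioi h, max (exp (-θ) * (θ * c - ∫ z in min θ ℓ..ℓ, u z)) 0 :=
        setIntegral_mono_on
          (integrableOn_Ioi_exp_neg_mul_sub_integral_min
            (hu.mono_set (Icc_subset_Icc_left hh)) hh hhℓ)
          (hpos.mono_set (Ioi_subset_Ioi hh)) measurableSet_Ioi fun _ _ => le_max_left _ _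
    _ ≤ ∫ θ in Ioi 0, max (exp (-θ) * (θ * c - ∫ z in min θ ℓ..ℓ, u z)) 0 :=
        setIntegral_mono_set hpos (.of_forall fun _ => le_max_right _ _)
          (Ioi_subset_Ioi hh).eventuallyLE
    _ = ∫ θ in Ioi 0, exp (-θ) * max (θ * c - ∫ z in min θ ℓ..ℓ, u z) 0 := by
        simp_rw [mul_max_of_nonneg _ _ (exp_pos _).le, mul_zero]

end TailIntegral

theorem closed_form_lower_bound_general_general
    (g : ℝ → ℝ) (hg : MonotoneOn g (Set.Ici 0))
    (ℓ h : ℝ) (hh : h ∈ Set.Icc (0 : ℝ) ℓ) :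
    (∫ θ in (0 : ℝ)..ℓ, Real.exp (-θ) * g θ)
        + (∫ θ in Set.Ioi (0 : ℝ), Real.exp (-θ) *
            max (θ * (1 - g ℓ) - ∫ z in min θ ℓ..ℓ, (1 - g z)) 0)
      ≥ (∫ θ in (0 : ℝ)..ℓ, Real.exp (-θ) * g θ)
          - (∫ z in h..ℓ, (Real.exp (-h) - Real.exp (-z)) * (1 - g z))
          + (1 + h) * Real.exp (-h) * (1 - g ℓ) := by
  have hu : IntegrableOn (fun z => 1 - g z) (Icc 0 ℓ) :=
    (integrableOn_const (C := (1 : ℝ)) measure_Icc_lt_top.ne).sub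
      ((hg.mono Icc_subset_Ici_self).integrableOn_isCompact isCompact_Icc)
  have := le_integral_Ioi_exp_neg_mul_max_sub_integral_min (c := 1 - g ℓ) hu hh.1 hh.2
  linarith

/-- Sufficiency of the closed-form lower bound in the general-probability
analysis of Stochastic Balance. -/
theorem closed_form_lower_bound_general
    (g : ℝ → ℝ) (hg : MonotoneOn g (Set.Ici 0))
    (hrange : ∀ x ∈ Set.Ici (0 : ℝ), g x ∈ Set.Icc (0 : ℝ) 1)
    (ℓ h : ℝ) (hℓ : 0 ≤ ℓ) (hh : h ∈ Set.Icc (0 : ℝ) ℓ)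
    (hkey : h * (1 - g ℓ) ≥ ∫ z in h..ℓ, (1 - g z)) :
    (∫ θ in (0 : ℝ)..ℓ, Real.exp (-θ) * g θ)
        + (∫ θ in Set.Ioi (0 : ℝ), Real.exp (-θ) *
            max (θ * (1 - g ℓ) - ∫ z in min θ ℓ..ℓ, (1 - g z)) 0)
      ≥ (∫ θ in (0 : ℝ)..ℓ, Real.exp (-θ) * g θ)
          - (∫ z in h..ℓ, (Real.exp (-h) - Real.exp (-z)) * (1 - g z))
          + (1 + h) * Real.exp (-h) * (1 - g ℓ) :=
  closed_form_lower_bound_general_general g hg ℓ h hh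
end
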